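/- arXiv:1104.4416 — 11 statements merged into one kernel-verified Lean document; each statement's English description precedes it below -/
import Mathlib

section
/- In the abelian group A_𝒯, one has (q² − 1)·ε = 0. -/
/-- A triangle presentation compatible with the bijection `lam : P ≃ L`:
a set of triples satisfying conditions (i), (ii), (iii). -/
structure IsTrianglePresentation {P L : Type*} [Membership P L]
    (lam : P ≃ L) (T : Set (P × P × P)) : Prop where
  exists_iff : ∀ x y : P, (∃ z : P, (x, y, z) ∈ T) ↔ y ∈ lam x
  cyclic : ∀ x y z : P, (x, y, z) ∈ T → (y, z, x) ∈ T
  unique : ∀ x y z z' : P, (x, y, z) ∈ T → (x, y, z') ∈ T → z = z'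

open Classical in
/-- Relators of `A_𝒯`: generators are the points of `P` plus one extra generator
`ε` (encoded as `none : Option P`). -/
def triangleRels {P L : Type*} [Fintype P] [Membership P L]
    (lam : P ≃ L) (T : Set (P × P × P)) : Set (FreeAbelianGroup (Option P)) :=
  (Set.range fun x : P =>
      (∑ y ∈ Finset.univ.filter fun y : P => ¬ y ∈ lam x, FreeAbelianGroup.of (some y))
        - FreeAbelianGroup.of (some x)) ∪
  ((fun t : P × P × P =>
      FreeAbelianGroup.of (some t.1) + FreeAbelianGroup.of (some t.2.1)
        + FreeAbelianGroup.of (some t.2.2) - FreeAbelianGroup.of (none : Option P)) '' T) ∪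
  {(∑ x : P, FreeAbelianGroup.of (some x)) - FreeAbelianGroup.of (none : Option P)}

/-- The abelian group `A_𝒯`, presented by generators `P ∪ {ε}` and the relations above. -/
abbrev TriangleGroup {P L : Type*} [Fintype P] [Membership P L]
    (lam : P ≃ L) (T : Set (P × P × P)) : Type _ :=
  FreeAbelianGroup (Option P) ⧸ AddSubgroup.closure (triangleRels lam T)

/-- The image in `A_𝒯` of the generator corresponding to a point `x ∈ P`. -/
def triangleGen {P L : Type*} [Fintype P] [Membership P L]
    (lam : P ≃ L) (T : Set (P × P × P)) (x : P) : TriangleGroup lam T :=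
  QuotientAddGroup.mk (FreeAbelianGroup.of (some x))

/-- The image in `A_𝒯` of the generator `ε`. -/
def triangleEps {P L : Type*} [Fintype P] [Membership P L]
    (lam : P ≃ L) (T : Set (P × P × P)) : TriangleGroup lam T :=
  QuotientAddGroup.mk (FreeAbelianGroup.of (none : Option P))

open Classical in
theorem stmt1 {P L : Type*} [Fintype P] [Fintype L] [Membership P L]
    [Configuration.ProjectivePlane P L] (q : ℕ) (hq : 2 ≤ q)
    (horder : Configuration.ProjectivePlane.order P L = q)
    (lam : P ≃ L) (T : Set (P × P × P)) (hT : IsTrianglePresentation lam T) :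
    (q ^ 2 - 1) • triangleEps lam T = 0 := by

  classical
  set S : FreeAbelianGroup (Option P) := ∑ x : P, FreeAbelianGroup.of (some x) with hS
  set C := AddSubgroup.closure (triangleRels lam T) with hC
  -- counting: each point y lies on q+1 of the lines lam x
  have hcard : ∀ y : P,
      (Finset.univ.filter fun x : P => ¬ y ∈ lam x).card = q ^ 2 := by
    intro y
    have hmem : (Finset.univ.filter fun x : P => y ∈ lam x).card = q + 1 := by
      calc (Finset.univ.filter fun x : P => y ∈ lam x).card
          = Fintype.card {x : P // y ∈ lam x} := (Fintype.card_subtype _).symm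
        _ = Fintype.card {l : L // y ∈ l} :=
            Fintype.card_congr (lam.subtypeEquiv fun x => Iff.rfl)
        _ = Nat.card {l : L // y ∈ l} := (Nat.card_eq_fintype_card).symm
        _ = Configuration.lineCount L y := rfl
        _ = q + 1 := by
            rw [Configuration.ProjectivePlane.lineCount_eq, horder]
    have htot := Finset.card_filter_add_card_filter_not
      (s := (Finset.univ : Finset P)) (p := fun x : P => y ∈ lam x)
    have hP : Fintype.card P = q ^ 2 + q + 1 := by
      rw [Configuration.ProjectivePlane.card_points P L, horder]
    rw [Finset.card_univ, hP, hmem] at htot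
    omega
  -- the sum of the point-relators
  have hsum : ∑ x : P,
      ((∑ y ∈ Finset.univ.filter fun y : P => ¬ y ∈ lam x,
        FreeAbelianGroup.of (some y)) - FreeAbelianGroup.of (some x))
      = q ^ 2 • S - S := by
    rw [Finset.sum_sub_distrib, ← hS]
    congr 1
    calc ∑ x : P, ∑ y ∈ Finset.univ.filter fun y : P => ¬ y ∈ lam x,
          FreeAbelianGroup.of (some y)
        = ∑ x : P, ∑ y : P,
            if ¬ y ∈ lam x then FreeAbelianGroup.of (some y) else 0 := by
          simp [Finset.sum_filter]
      _ = ∑ y : P, ∑ x : P,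
            if ¬ y ∈ lam x then FreeAbelianGroup.of (some y) else 0 :=
          Finset.sum_comm
      _ = ∑ y : P, q ^ 2 • FreeAbelianGroup.of (some y) := by
          refine Finset.sum_congr rfl fun y _ => ?_
          rw [← Finset.sum_filter, Finset.sum_const, hcard]
      _ = q ^ 2 • S := (Finset.smul_sum).symm
  -- memberships in the closure
  have hrel1 : ∀ x : P,
      ((∑ y ∈ Finset.univ.filter fun y : P => ¬ y ∈ lam x,
        FreeAbelianGroup.of (some y)) - FreeAbelianGroup.of (some x)) ∈ C :=
    fun x => AddSubgroup.subset_closure (Or.inl (Or.inl ⟨x, rfl⟩))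
  have hrel3 : S - FreeAbelianGroup.of (none : Option P) ∈ C :=
    AddSubgroup.subset_closure (Or.inr rfl)
  have hsum_mem : (q ^ 2 • S - S) ∈ C := by
    rw [← hsum]; exact AddSubgroup.sum_mem _ fun x _ => hrel1 x
  -- key identity
  have h1 : 1 ≤ q ^ 2 := by nlinarith
  have hsmul : (q ^ 2 - 1) • S = q ^ 2 • S - S := by
    have : q ^ 2 • S = (q ^ 2 - 1) • S + S := by
      conv_lhs => rw [show q ^ 2 = (q ^ 2 - 1) + 1 by omega]
      rw [add_smul, one_smul]
    rw [this]; abel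
  have hkey : (q ^ 2 - 1) • FreeAbelianGroup.of (none : Option P)
      = (q ^ 2 • S - S) - (q ^ 2 - 1) • (S - FreeAbelianGroup.of (none : Option P)) := by
    rw [smul_sub, hsmul]; abel
  have hmem : (q ^ 2 - 1) • FreeAbelianGroup.of (none : Option P) ∈ C := by
    rw [hkey]
    exact AddSubgroup.sub_mem _ hsum_mem (AddSubgroup.nsmul_mem _ hrel3 _)
  have : (q ^ 2 - 1) • triangleEps lam T
      = QuotientAddGroup.mk ((q ^ 2 - 1) • FreeAbelianGroup.of (none : Option P)) := by
    rw [triangleEps, ← QuotientAddGroup.mk'_apply, ← map_nsmul, QuotientAddGroup.mk'_apply]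
  rw [this, QuotientAddGroup.eq_zero_iff]
  exact hmem
end

section
/- The abelian group A_𝒯 is finite. -/
/-!
The relations `∑_{y ∉ λ(x)} y = x` alone already force finiteness. Their coefficient matrix is
`J - N - 1`, where `N` is the incidence matrix of the plane (rows reindexed by `λ`) and `J` the
all-ones matrix. From `Nᵀ N = q • 1 + J` and the column sums `q + 1` of `N` one gets that
`J - N - 1` is nonsingular, so by the adjugate identity its determinant `d ≠ 0` kills every
generator `x`, and `d • ε = 0` because `ε = ∑ x`. A finitely generated abelian group of
exponent dividing `d` is finite.
-/

open Finset Matrix Configuration ProjectivePlane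

section Matrix

variable {ι R : Type*} [Fintype ι] [DecidableEq ι]

theorem Matrix.det_smul_eq_zero_of_sum_smul_eq_zero {M : Type*} [CommRing R] [AddCommGroup M]
    [Module R M] (A : Matrix ι ι R) {g : ι → M} (hg : ∀ i, ∑ j, A i j • g j = 0) (i : ι) :
    A.det • g i = 0 :=
  calc A.det • g i = ∑ j, (A.adjugate * A) i j • g j := by
        simp [adjugate_mul, one_apply, ite_smul]
    _ = ∑ k, A.adjugate i k • ∑ j, A k j • g j := by
        simp only [mul_apply, sum_smul, smul_sum, smul_smul]
        exact sum_comm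
    _ = 0 := by simp [hg]

/-- A kernel vector `v` of `J - N - 1` satisfies `N v = (∑ v) - v`; summing forces `∑ v = 0`,
and then `|v|² = |N v|² = μ |v|²` forces `v = 0`. -/
theorem Matrix.det_allOnes_sub_sub_one_ne_zero [CommRing R] [LinearOrder R]
    [IsStrictOrderedRing R] (N : Matrix ι ι R) {r μ : R} (hcol : ∀ j, ∑ i, N i j = r)
    (hgram : Nᵀ * N = μ • 1 + of fun _ _ => 1) (hcard : (Fintype.card ι : R) ≠ r + 1)
    (hμ : μ ≠ 1) : (of (fun _ _ => (1 : R)) - N - 1).det ≠ 0 := by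
  set J : Matrix ι ι R := of fun _ _ => 1
  intro hdet
  obtain ⟨v, hv0, hv⟩ := exists_mulVec_eq_zero_iff.mpr hdet
  set s := ∑ j, v j
  have hJ : J *ᵥ v = fun _ => s := by
    ext i; simp [J, mulVec, dotProduct, s]
  have hNv : N *ᵥ v = fun i => s - v i := by
    rw [sub_mulVec, sub_mulVec, hJ, one_mulVec] at hv
    funext i
    have hi := congrFun hv i
    simp only [Pi.sub_apply, Pi.zero_apply] at hi
    linear_combination -hi
  have hs : s = 0 := by
    have hsum : ∑ i, (N *ᵥ v) i = r * s := by
      simp only [mulVec, dotProduct]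
      rw [sum_comm]
      simp_rw [← sum_mul, hcol, ← mul_sum, s]
    rw [hNv, sum_sub_distrib, sum_const, card_univ, nsmul_eq_mul] at hsum
    have : ((Fintype.card ι : R) - (r + 1)) * s = 0 := by linear_combination hsum
    exact (mul_eq_zero.mp this).resolve_left (sub_ne_zero.mpr hcard)
  have hNv' : N *ᵥ v = -v := by rw [hNv, hs]; ext; simp
  have hnorm : v ⬝ᵥ v = μ * (v ⬝ᵥ v) :=
    calc v ⬝ᵥ v = (N *ᵥ v) ⬝ᵥ (N *ᵥ v) := by rw [hNv', neg_dotProduct_neg]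
      _ = v ⬝ᵥ ((Nᵀ * N) *ᵥ v) := by
        rw [← mulVec_mulVec, dotProduct_mulVec v, vecMul_transpose]
      _ = μ * (v ⬝ᵥ v) := by
        rw [hgram, add_mulVec, smul_mulVec, one_mulVec, hJ, hs, dotProduct_add, dotProduct_smul]
        simp
  have : (μ - 1) * (v ⬝ᵥ v) = 0 := by linear_combination -hnorm
  exact hv0 (dotProduct_self_eq_zero.mp ((mul_eq_zero.mp this).resolve_left (sub_ne_zero.mpr hμ)))

end Matrix

instance FreeAbelianGroup.fg_of_finite {α : Type*} [Finite α] : AddGroup.FG (FreeAbelianGroup α) :=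
  Module.Finite.iff_addGroup_fg.mp (.of_basis (FreeAbelianGroup.basis α))

theorem FreeAbelianGroup.zsmul_eq_zero_of_zsmul_mk_of_eq_zero {α : Type*}
    {H : AddSubgroup (FreeAbelianGroup α)} {d : ℤ}
    (h : ∀ a, d • (QuotientAddGroup.mk (of a) : FreeAbelianGroup α ⧸ H) = 0)
    (g : FreeAbelianGroup α ⧸ H) : d • g = 0 := by
  obtain ⟨f, rfl⟩ := QuotientAddGroup.mk'_surjective H g
  have : d • QuotientAddGroup.mk' H = 0 := FreeAbelianGroup.lift_ext _ _ h
  exact DFunLike.congr_fun this f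

theorem AddCommGroup.finite_of_fg_of_zsmul_eq_zero (G : Type*) [AddCommGroup G] [AddGroup.FG G]
    {d : ℤ} (hd : d ≠ 0) (h : ∀ g : G, d • g = 0) : Finite G :=
  finite_of_fg_isAddTorsion G fun g => isOfFinAddOrder_iff_zsmul_eq_zero.mpr ⟨d, hd, h g⟩

namespace Configuration.ProjectivePlane

variable (P L R : Type*) [Membership P L] [Semiring R]

open Classical in
noncomputable def incidenceMatrix : Matrix L P R :=
  of fun l p => if p ∈ l then 1 else 0

variable [Fintype L] [ProjectivePlane P L]

open Classical in
theorem card_filter_mem_and_mem {p p' : P} (h : p ≠ p') :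
    #{l : L | p ∈ l ∧ p' ∈ l} = 1 := by
  rw [card_eq_one]
  refine ⟨HasLines.mkLine h, eq_singleton_iff_unique_mem.mpr ⟨?_, fun l hl => ?_⟩⟩
  · simpa using HasLines.mkLine_ax h
  · rw [mem_filter] at hl
    exact (Nondegenerate.eq_or_eq hl.2.1 hl.2.2 (HasLines.mkLine_ax h).1
      (HasLines.mkLine_ax h).2).resolve_left h

variable [Finite P]

open Classical in
theorem card_filter_mem (p : P) : #{l : L | p ∈ l} = order P L + 1 := by
  rw [← lineCount_eq L p, lineCount, Nat.card_eq_fintype_card, Fintype.card_subtype]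

theorem sum_incidenceMatrix_apply (p : P) :
    ∑ l, incidenceMatrix P L R l p = order P L + 1 := by
  classical
  simp [incidenceMatrix, sum_boole, card_filter_mem]

theorem incidenceMatrix_transpose_mul_self [DecidableEq P] :
    (incidenceMatrix P L R)ᵀ * incidenceMatrix P L R
      = (order P L : R) • 1 + of fun _ _ => 1 := by
  classical
  ext p p'
  simp only [mul_apply, transpose_apply, incidenceMatrix, of_apply, mul_boole, ← ite_and,
    sum_boole]
  by_cases h : p = p'
  · subst h
    simp [card_filter_mem, add_comm]
  · simp [h, card_filter_mem_and_mem P L (Ne.symm h)]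

end Configuration.ProjectivePlane

section TriangleGroup

variable {P L : Type*} [Fintype P] [Membership P L]

open Classical in
/-- The coefficient matrix of the relations `∑_{y ∉ lam x} y - x = 0`. -/
noncomputable def lineComplementMatrix (lam : P ≃ L) : Matrix P P ℤ :=
  of (fun _ _ => 1) - (incidenceMatrix P L ℤ).submatrix lam id - 1

theorem sum_lineComplementMatrix_smul_triangleGen (lam : P ≃ L) (T : Set (P × P × P)) (x : P) :
    ∑ y, lineComplementMatrix lam x y • triangleGen lam T y = 0 := by
  classical
  have hrel : (QuotientAddGroup.mk ((∑ y ∈ univ.filter fun y : P => ¬ y ∈ lam x,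
      FreeAbelianGroup.of (some y)) - FreeAbelianGroup.of (some x)) : TriangleGroup lam T) = 0 :=
    (QuotientAddGroup.eq_zero_iff _).mpr (AddSubgroup.subset_closure (Or.inl (Or.inl ⟨x, rfl⟩)))
  rw [← hrel]
  simp only [lineComplementMatrix, incidenceMatrix, Matrix.sub_apply, of_apply, submatrix_apply,
    id_eq, one_apply, triangleGen, sub_smul, one_smul, ite_smul, zero_smul, sum_sub_distrib,
    sum_ite_eq, mem_univ, ↓reduceIte, sum_filter, ite_not, QuotientAddGroup.mk_sub,
    QuotientAddGroup.mk_sum, sub_left_inj]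
  rw [← sum_sub_distrib]
  refine sum_congr rfl fun y _ => ?_
  split_ifs <;> simp

theorem sum_triangleGen (lam : P ≃ L) (T : Set (P × P × P)) :
    ∑ x, triangleGen lam T x = triangleEps lam T := by
  have hrel : ((∑ x : P, FreeAbelianGroup.of (some x)) - FreeAbelianGroup.of none
      : FreeAbelianGroup (Option P)) ∈ AddSubgroup.closure (triangleRels lam T) :=
    AddSubgroup.subset_closure (Or.inr rfl)
  rw [triangleEps, ← sub_eq_zero]
  simpa [triangleGen] using (QuotientAddGroup.eq_zero_iff _).mpr hrel

variable [Fintype L] [ProjectivePlane P L]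

open Classical in
theorem lineComplementMatrix_det_ne_zero (lam : P ≃ L) : (lineComplementMatrix lam).det ≠ 0 := by
  have hq : (1 : ℤ) < order P L := by exact_mod_cast one_lt_order P L
  apply det_allOnes_sub_sub_one_ne_zero (r := (order P L : ℤ) + 1) (μ := order P L)
  · intro y
    rw [← sum_incidenceMatrix_apply P L ℤ y]
    exact lam.sum_comp fun l => incidenceMatrix P L ℤ l y
  · rw [transpose_submatrix, submatrix_mul_equiv, submatrix_id_id,
      incidenceMatrix_transpose_mul_self]
  · rw [card_points P L]
    push_cast
    nlinarith
  · exact hq.ne'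

end TriangleGroup

open Classical in
theorem stmt2_general {P L : Type*} [Fintype P] [Fintype L] [Membership P L]
    [Configuration.ProjectivePlane P L]
    (lam : P ≃ L) (T : Set (P × P × P)) :
    Finite (TriangleGroup lam T) := by
  have hgen := det_smul_eq_zero_of_sum_smul_eq_zero _
    (sum_lineComplementMatrix_smul_triangleGen lam T)
  refine AddCommGroup.finite_of_fg_of_zsmul_eq_zero _ (lineComplementMatrix_det_ne_zero lam)
    (FreeAbelianGroup.zsmul_eq_zero_of_zsmul_mk_of_eq_zero ?_)
  rintro (_ | p)
  · change _ • triangleEps lam T = 0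
    rw [← sum_triangleGen lam T, smul_sum]
    exact sum_eq_zero fun p _ => hgen p
  · exact hgen p

open Classical in
theorem stmt2 {P L : Type*} [Fintype P] [Fintype L] [Membership P L]
    [Configuration.ProjectivePlane P L] (q : ℕ) (hq : 2 ≤ q)
    (horder : Configuration.ProjectivePlane.order P L = q)
    (lam : P ≃ L) (T : Set (P × P × P)) (hT : IsTrianglePresentation lam T) :
    Finite (TriangleGroup lam T) :=
  stmt2_general lam T
end

section
/- There exists an additive group homomorphism f : A_𝒯 → ℤ/(q²−1)ℤ such that f(x) = q+1 for every generator x ∈ P and f(ε) = 3(q+1). -/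
open Classical in
theorem stmt3 {P L : Type*} [Fintype P] [Fintype L] [Membership P L]
    [Configuration.ProjectivePlane P L] (q : ℕ) (hq : 2 ≤ q)
    (horder : Configuration.ProjectivePlane.order P L = q)
    (lam : P ≃ L) (T : Set (P × P × P)) (hT : IsTrianglePresentation lam T) :
    ∃ f : TriangleGroup lam T →+ ZMod (q ^ 2 - 1),
      (∀ x : P, f (triangleGen lam T x) = ((q + 1 : ℕ) : ZMod (q ^ 2 - 1))) ∧
        f (triangleEps lam T) = ((3 * (q + 1) : ℕ) : ZMod (q ^ 2 - 1)) := by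

  classical
  set n := q ^ 2 - 1 with hn
  -- the lift on the free abelian group
  set g : FreeAbelianGroup (Option P) →+ ZMod n :=
    FreeAbelianGroup.lift (fun o => Option.rec ((3 * (q + 1) : ℕ) : ZMod n)
      (fun _ => ((q + 1 : ℕ) : ZMod n)) o) with hg
  have hgsome : ∀ x : P, g (FreeAbelianGroup.of (some x)) = ((q + 1 : ℕ) : ZMod n) := by
    intro x; simp [hg]
  have hgnone : g (FreeAbelianGroup.of (none : Option P)) = ((3 * (q + 1) : ℕ) : ZMod n) := by
    simp [hg]
  have hq2 : ((q : ZMod n)) ^ 2 = 1 := by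
    have h1 : 1 ≤ q ^ 2 := Nat.one_le_pow _ _ (by omega)
    have h2 : (q ^ 2 : ℕ) = n + 1 := by omega
    have := congrArg (fun m : ℕ => (m : ZMod n)) h2
    push_cast at this
    simpa [ZMod.natCast_self] using this
  have hcardP : Fintype.card P = q ^ 2 + q + 1 := by
    rw [Configuration.ProjectivePlane.card_points P L, horder]
  have hker : AddSubgroup.closure (triangleRels lam T) ≤ g.ker := by
    rw [AddSubgroup.closure_le]
    rintro r (⟨⟨x, rfl⟩ | ⟨t, ht, rfl⟩⟩ | hr)
    rotate_right
    · -- full sum relator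
      rw [Set.mem_singleton_iff] at hr
      subst hr
      simp only [SetLike.mem_coe, AddMonoidHom.mem_ker, map_sub, map_sum, hgsome, hgnone]
      rw [Finset.sum_const, Finset.card_univ, hcardP, nsmul_eq_mul]
      push_cast
      linear_combination ((q : ZMod n) + 2) * hq2
    · -- line relator
      have hcardline : (Finset.univ.filter fun y : P => ¬ y ∈ lam x).card = q ^ 2 := by
        have hpc : Configuration.pointCount P (lam x) = q + 1 := by
          rw [Configuration.ProjectivePlane.pointCount_eq P (lam x), horder]
        have : (Finset.univ.filter fun y : P => y ∈ lam x).card = q + 1 := by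
          rw [← hpc, Configuration.pointCount, Nat.card_eq_fintype_card,
            Fintype.card_subtype]
        have hsplit := Finset.card_filter_add_card_filter_not
          (s := (Finset.univ : Finset P)) (p := fun y : P => y ∈ lam x)
        rw [Finset.card_univ, hcardP] at hsplit
        omega
      simp only [SetLike.mem_coe, AddMonoidHom.mem_ker, map_sub, map_sum, hgsome]
      rw [Finset.sum_const, hcardline, nsmul_eq_mul]
      push_cast
      linear_combination ((q : ZMod n) + 1) * hq2
    · -- triangle relator
      simp only [SetLike.mem_coe, AddMonoidHom.mem_ker, map_sub, map_add, hgsome, hgnone]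
      push_cast
      ring
  refine ⟨QuotientAddGroup.lift _ g hker, fun x => ?_, ?_⟩
  · exact hgsome x
  · exact hgnone
end

section
/- Suppose there exists a subset ℳ ⊆ 𝒯 such that each element p ∈ P occurs precisely 3 times (counted with multiplicity) among the coordinates of the triples belonging to ℳ, i.e. for each p ∈ P the number of pairs (t, i) with t ∈ ℳ, i ∈ {1,2,3} and the i-th coordinate of t equal to p is exactly 3. Then (q−1)·ε = 0 in A_𝒯. -/
open Classical in
theorem stmt6 {P L : Type*} [Fintype P] [Fintype L] [Membership P L]
    [Configuration.ProjectivePlane P L] (q : ℕ) (hq : 2 ≤ q)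
    (horder : Configuration.ProjectivePlane.order P L = q)
    (lam : P ≃ L) (T : Set (P × P × P)) (hT : IsTrianglePresentation lam T)
    (ℳ : Finset (P × P × P)) (hℳT : ↑ℳ ⊆ T)
    (hcount : ∀ p : P,
      (ℳ.filter fun t => t.1 = p).card + (ℳ.filter fun t => t.2.1 = p).card
        + (ℳ.filter fun t => t.2.2 = p).card = 3) :
    (q - 1) • triangleEps lam T = 0 := by
  classical
  set ε := triangleEps lam T with hεdef
  let π : FreeAbelianGroup (Option P) →+ TriangleGroup lam T :=
    QuotientAddGroup.mk' (AddSubgroup.closure (triangleRels lam T))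
  have hπ0 : ∀ a ∈ triangleRels lam T, π a = 0 := fun a ha =>
    (QuotientAddGroup.eq_zero_iff a).2 (AddSubgroup.subset_closure ha)
  set S : FreeAbelianGroup (Option P) := ∑ x : P, FreeAbelianGroup.of (some x) with hSdef
  have hπeps : π (FreeAbelianGroup.of (none : Option P)) = ε := rfl
  have hπS : π S = ε := by
    have h : π (S - FreeAbelianGroup.of (none : Option P)) = 0 := hπ0 _ (Or.inr rfl)
    rw [map_sub, sub_eq_zero] at h
    rw [h, hπeps]
  have hcardP : Fintype.card P = q ^ 2 + q + 1 := by
    rw [Configuration.ProjectivePlane.card_points P L, horder]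
  have hline : ∀ y : P, (Finset.univ.filter fun x : P => y ∈ lam x).card = q + 1 := by
    intro y
    have h1 : (Finset.univ.filter fun x : P => y ∈ lam x).card
        = Fintype.card {x : P // y ∈ lam x} := (Fintype.card_subtype _).symm
    rw [h1, Fintype.card_congr ((lam.subtypeEquiv fun x => Iff.rfl :
        {x : P // y ∈ lam x} ≃ {l : L // y ∈ l}))]
    have h2 := Configuration.ProjectivePlane.lineCount_eq L y
    rwa [Configuration.lineCount, Nat.card_eq_fintype_card, horder] at h2
  have hnot : ∀ y : P, (Finset.univ.filter fun x : P => ¬ y ∈ lam x).card = q ^ 2 := by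
    intro y
    have h := Finset.card_filter_add_card_filter_not
      (s := (Finset.univ : Finset P)) (p := fun x : P => y ∈ lam x)
    rw [hline y, Finset.card_univ, hcardP] at h
    omega
  -- relation (1): q ^ 2 • ε = ε
  have h1 : (q ^ 2) • ε = ε := by
    have hz : π (∑ x : P, ((∑ y ∈ Finset.univ.filter fun y : P => ¬ y ∈ lam x,
        FreeAbelianGroup.of (some y)) - FreeAbelianGroup.of (some x))) = 0 := by
      rw [map_sum]
      exact Finset.sum_eq_zero fun x _ => hπ0 _ (Or.inl (Or.inl ⟨x, rfl⟩))
    have hsum : (∑ x : P, ((∑ y ∈ Finset.univ.filter fun y : P => ¬ y ∈ lam x,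
        FreeAbelianGroup.of (some y)) - FreeAbelianGroup.of (some x)))
        = (q ^ 2) • S - S := by
      rw [Finset.sum_sub_distrib]
      congr 1
      calc ∑ x : P, ∑ y ∈ Finset.univ.filter fun y : P => ¬ y ∈ lam x,
              FreeAbelianGroup.of (some y)
          = ∑ x : P, ∑ y : P,
              if ¬ y ∈ lam x then FreeAbelianGroup.of (some y) else 0 := by
            simp_rw [Finset.sum_filter]
        _ = ∑ y : P, ∑ x : P,
              if ¬ y ∈ lam x then FreeAbelianGroup.of (some y) else 0 :=
            Finset.sum_comm
        _ = ∑ y : P, (Finset.univ.filter fun x : P => ¬ y ∈ lam x).card •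
              FreeAbelianGroup.of (some y) := by
            refine Finset.sum_congr rfl fun y _ => ?_
            rw [← Finset.sum_filter, Finset.sum_const]
        _ = (q ^ 2) • S := by
            rw [hSdef, Finset.smul_sum]
            exact Finset.sum_congr rfl fun y _ => by rw [hnot y]
    rw [hsum, map_sub, map_nsmul, hπS, sub_eq_zero] at hz
    exact hz
  -- cardinality of ℳ
  have hfibcard : ∀ g : P × P × P → P,
      ∑ p : P, (ℳ.filter fun t => g t = p).card = ℳ.card := fun g =>
    (Finset.card_eq_sum_card_fiberwise fun x _ => Finset.mem_univ (g x)).symm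
  have hMcard : ℳ.card = q ^ 2 + q + 1 := by
    have key : 3 * Fintype.card P = 3 * ℳ.card := by
      calc 3 * Fintype.card P = ∑ _p : P, 3 := by
            rw [Finset.sum_const, Finset.card_univ, smul_eq_mul, mul_comm]
        _ = ∑ p : P, ((ℳ.filter fun t => t.1 = p).card
              + (ℳ.filter fun t => t.2.1 = p).card
              + (ℳ.filter fun t => t.2.2 = p).card) :=
            Finset.sum_congr rfl fun p _ => (hcount p).symm
        _ = 3 * ℳ.card := by
            rw [Finset.sum_add_distrib, Finset.sum_add_distrib,
              hfibcard (fun t => t.1), hfibcard (fun t => t.2.1),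
              hfibcard (fun t => t.2.2)]
            ring
    omega
  -- relation (2): 3 • ε = (q ^ 2 + q + 1) • ε
  have hfib : ∀ g : P × P × P → P,
      ∑ t ∈ ℳ, FreeAbelianGroup.of (some (g t))
        = ∑ p : P, (ℳ.filter fun t => g t = p).card • FreeAbelianGroup.of (some p) := by
    intro g
    rw [← Finset.sum_fiberwise ℳ g (fun t => FreeAbelianGroup.of (some (g t)))]
    refine Finset.sum_congr rfl fun p _ => ?_
    rw [← Finset.sum_const]
    exact Finset.sum_congr rfl fun t ht => by rw [(Finset.mem_filter.1 ht).2]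
  have h2 : 3 • ε = (q ^ 2 + q + 1) • ε := by
    have hz : π (∑ t ∈ ℳ, (FreeAbelianGroup.of (some t.1)
        + FreeAbelianGroup.of (some t.2.1) + FreeAbelianGroup.of (some t.2.2)
        - FreeAbelianGroup.of (none : Option P))) = 0 := by
      rw [map_sum]
      exact Finset.sum_eq_zero fun t ht => hπ0 _ (Or.inl (Or.inr ⟨t, hℳT ht, rfl⟩))
    have hsum : (∑ t ∈ ℳ, (FreeAbelianGroup.of (some t.1)
        + FreeAbelianGroup.of (some t.2.1) + FreeAbelianGroup.of (some t.2.2)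
        - FreeAbelianGroup.of (none : Option P)))
        = 3 • S - ℳ.card • FreeAbelianGroup.of (none : Option P) := by
      rw [Finset.sum_sub_distrib, Finset.sum_const]
      congr 1
      calc ∑ t ∈ ℳ, (FreeAbelianGroup.of (some t.1)
              + FreeAbelianGroup.of (some t.2.1) + FreeAbelianGroup.of (some t.2.2))
          = (∑ t ∈ ℳ, FreeAbelianGroup.of (some t.1))
              + (∑ t ∈ ℳ, FreeAbelianGroup.of (some t.2.1))
              + (∑ t ∈ ℳ, FreeAbelianGroup.of (some t.2.2)) := by
            rw [Finset.sum_add_distrib, Finset.sum_add_distrib]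
        _ = ∑ p : P, ((ℳ.filter fun t => t.1 = p).card
              + (ℳ.filter fun t => t.2.1 = p).card
              + (ℳ.filter fun t => t.2.2 = p).card) • FreeAbelianGroup.of (some p) := by
            rw [hfib (fun t => t.1), hfib (fun t => t.2.1), hfib (fun t => t.2.2),
              ← Finset.sum_add_distrib, ← Finset.sum_add_distrib]
            exact Finset.sum_congr rfl fun p _ => by rw [add_nsmul, add_nsmul]
        _ = 3 • S := by
            rw [hSdef, Finset.smul_sum]
            exact Finset.sum_congr rfl fun p _ => by rw [hcount p]
    rw [hsum, map_sub, map_nsmul, map_nsmul, hπS, hπeps, sub_eq_zero, hMcard] at hz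
    exact hz
  -- combine
  have e1 : (q ^ 2 + q + 1) • ε = ε + (q + 1) • ε := by
    have hn : q ^ 2 + q + 1 = q ^ 2 + (q + 1) := by omega
    rw [hn, add_nsmul, h1]
  rw [e1] at h2
  have h3 : (q + 2) • ε = 3 • ε := by
    calc (q + 2) • ε = (1 + (q + 1)) • ε := by rw [show q + 2 = 1 + (q + 1) by omega]
      _ = ε + (q + 1) • ε := by rw [add_nsmul, one_nsmul]
      _ = 3 • ε := h2.symm
  have key : (q - 1) • ε + 3 • ε = 0 + 3 • ε := by
    rw [zero_add, ← add_nsmul]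
    have hq2 : q - 1 + 3 = q + 2 := by omega
    rw [hq2, h3]
  exact add_right_cancel key
end

section
/- Suppose there exists a subset ℳ ⊆ 𝒯 such that each of the three coordinate projections from ℳ onto P (sending a triple to its first, second, and third coordinate respectively) is a bijection from ℳ onto P. Then (q−1)·ε = 0 in A_𝒯. -/
open Classical in
theorem stmt7 {P L : Type*} [Fintype P] [Fintype L] [Membership P L]
    [Configuration.ProjectivePlane P L] (q : ℕ) (hq : 2 ≤ q)
    (horder : Configuration.ProjectivePlane.order P L = q)
    (lam : P ≃ L) (T : Set (P × P × P)) (hT : IsTrianglePresentation lam T)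
    (ℳ : Set (P × P × P)) (hℳT : ℳ ⊆ T)
    (h1 : Set.BijOn (fun t : P × P × P => t.1) ℳ Set.univ)
    (h2 : Set.BijOn (fun t : P × P × P => t.2.1) ℳ Set.univ)
    (h3 : Set.BijOn (fun t : P × P × P => t.2.2) ℳ Set.univ) :
    (q - 1) • triangleEps lam T = 0 := by
  set N := AddSubgroup.closure (triangleRels lam T) with hN
  let φ : FreeAbelianGroup (Option P) →+ TriangleGroup lam T := QuotientAddGroup.mk' N
  have hφ : ∀ r ∈ triangleRels lam T, φ r = 0 := fun r hr =>
    (QuotientAddGroup.eq_zero_iff r).2 (AddSubgroup.subset_closure hr)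
  set g : P → TriangleGroup lam T := triangleGen lam T with hgdef
  set e : TriangleGroup lam T := triangleEps lam T with hedef
  have hg : ∀ x, φ (FreeAbelianGroup.of (some x)) = g x := fun _ => rfl
  have he : φ (FreeAbelianGroup.of (none : Option P)) = e := rfl
  -- relation 3 : total sum
  have rel3 : ∑ x : P, g x = e := by
    have h0 := hφ _ (Or.inr (rfl : _ = _))
    rw [map_sub, map_sum, sub_eq_zero] at h0
    simpa [hg, he] using h0
  -- relation 1 : point relations
  have rel1 : ∀ x : P, ∑ y ∈ Finset.univ.filter (fun y : P => ¬ y ∈ lam x), g y = g x := by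
    intro x
    have h0 := hφ _ (Or.inl (Or.inl ⟨x, rfl⟩))
    rw [map_sub, map_sum, sub_eq_zero] at h0
    simpa [hg] using h0
  -- relation 2 : triangle relations
  have rel2 : ∀ t ∈ T, g t.1 + g t.2.1 + g t.2.2 = e := by
    intro t ht
    have h0 := hφ _ (Or.inl (Or.inr ⟨t, ht, rfl⟩))
    rw [map_sub, map_add, map_add, sub_eq_zero] at h0
    simpa [hg, he] using h0
  -- card of P
  have hcardP : Fintype.card P = q ^ 2 + q + 1 := by
    rw [Configuration.ProjectivePlane.card_points P L, horder]
  -- counting lemma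
  have hcount : ∀ y : P, (Finset.univ.filter fun x : P => ¬ y ∈ lam x).card = q ^ 2 := by
    intro y
    have hon : (Finset.univ.filter fun x : P => y ∈ lam x).card = q + 1 := by
      have e1 : (Finset.univ.filter fun x : P => y ∈ lam x).card
          = Fintype.card {x : P // y ∈ lam x} := (Fintype.card_subtype _).symm
      have e2 : Nat.card {x : P // y ∈ lam x} = Nat.card {l : L // y ∈ l} :=
        Nat.card_congr (lam.subtypeEquiv (fun x => by rfl))
      have e3 : Configuration.lineCount L y = q + 1 := by
        rw [Configuration.ProjectivePlane.lineCount_eq, horder]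
      rw [e1, ← Nat.card_eq_fintype_card, e2]
      exact e3
    have := Finset.card_filter_add_card_filter_not
      (s := (Finset.univ : Finset P)) (p := fun x : P => y ∈ lam x)
    rw [Finset.card_univ, hcardP, hon] at this
    omega
  -- Step A : q² • e = e
  have hA : q ^ 2 • e = e := by
    have lhs : ∑ x : P, ∑ y ∈ Finset.univ.filter (fun y : P => ¬ y ∈ lam x), g y
        = q ^ 2 • e := by
      calc ∑ x : P, ∑ y ∈ Finset.univ.filter (fun y : P => ¬ y ∈ lam x), g y
          = ∑ x : P, ∑ y : P, if ¬ y ∈ lam x then g y else 0 :=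
            Finset.sum_congr rfl fun x _ => Finset.sum_filter _ _
        _ = ∑ y : P, ∑ x : P, if ¬ y ∈ lam x then g y else 0 := Finset.sum_comm
        _ = ∑ y : P, (Finset.univ.filter fun x : P => ¬ y ∈ lam x).card • g y :=
            Finset.sum_congr rfl fun y _ => by
              rw [← Finset.sum_filter, Finset.sum_const]
        _ = ∑ y : P, q ^ 2 • g y := by
            refine Finset.sum_congr rfl fun y _ => by rw [hcount y]
        _ = q ^ 2 • ∑ y : P, g y := (Finset.smul_sum).symm
        _ = q ^ 2 • e := by rw [rel3]
    rw [← lhs]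
    calc ∑ x : P, ∑ y ∈ Finset.univ.filter (fun y : P => ¬ y ∈ lam x), g y
        = ∑ x : P, g x := Finset.sum_congr rfl fun x _ => rel1 x
      _ = e := rel3
  -- Step B : (q²+q+1) • e = 3 • e
  have hB : (q ^ 2 + q + 1) • e = 3 • e := by
    set M : Finset (P × P × P) := (Set.toFinite ℳ).toFinset with hM
    have hmemM : ∀ t, t ∈ M ↔ t ∈ ℳ := fun t => Set.Finite.mem_toFinset _
    have sumproj : ∀ (f : P × P × P → P), Set.BijOn f ℳ Set.univ →
        ∑ t ∈ M, g (f t) = e := by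
      intro f hf
      have hinj : ∀ x ∈ M, ∀ y ∈ M, f x = f y → x = y := fun x hx y hy h =>
        hf.injOn ((hmemM x).1 hx) ((hmemM y).1 hy) h
      have himg : M.image f = Finset.univ := by
        apply Finset.eq_univ_of_forall
        intro x
        obtain ⟨t, ht, rfl⟩ := hf.surjOn (Set.mem_univ x)
        exact Finset.mem_image.2 ⟨t, (hmemM t).2 ht, rfl⟩
      rw [← Finset.sum_image hinj, himg, rel3]
    have hcardM : M.card = q ^ 2 + q + 1 := by
      have hinj : ∀ x ∈ M, ∀ y ∈ M, x.1 = y.1 → x = y := fun x hx y hy h =>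
        h1.injOn ((hmemM x).1 hx) ((hmemM y).1 hy) h
      have himg : M.image (fun t : P × P × P => t.1) = Finset.univ := by
        apply Finset.eq_univ_of_forall
        intro x
        obtain ⟨t, ht, rfl⟩ := h1.surjOn (Set.mem_univ x)
        exact Finset.mem_image.2 ⟨t, (hmemM t).2 ht, rfl⟩
      rw [← hcardP, ← Finset.card_univ, ← himg, Finset.card_image_of_injOn hinj]
    have total : ∑ t ∈ M, (g t.1 + g t.2.1 + g t.2.2) = M.card • e := by
      rw [Finset.sum_congr rfl fun t ht => rel2 t (hℳT ((hmemM t).1 ht)),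
        Finset.sum_const]
    rw [Finset.sum_add_distrib, Finset.sum_add_distrib,
      sumproj (fun t => t.1) h1, sumproj (fun t => t.2.1) h2,
      sumproj (fun t => t.2.2) h3, hcardM] at total
    rw [← total]
    have : (3 : ℕ) • e = e + e + e := by
      rw [show (3:ℕ) = 1 + 1 + 1 from rfl, add_nsmul, add_nsmul, one_nsmul]
    rw [this]
  -- combine
  have hq2 : (q + 2) • e = 3 • e := by
    have h4 : (q + 2) • e + q ^ 2 • e = (q ^ 2 + q + 1) • e + 1 • e := by
      rw [← add_nsmul, ← add_nsmul]; congr 1; omega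
    rw [hA, hB, one_nsmul] at h4
    exact add_right_cancel h4
  have hfin : (q - 1) • e + 3 • e = 0 + 3 • e := by
    rw [← add_nsmul, show q - 1 + 3 = q + 2 by omega, hq2, zero_add]
  have := add_right_cancel hfin
  simpa [hedef] using this
end

section
/- Suppose there exists a bijection σ : P → P such that (x,y,z) ∈ 𝒯 implies (σx, σy, σz) ∈ 𝒯, and such that the cyclic group generated by σ acts simply transitively on P (for all p, p' ∈ P there is exactly one power σⁿ of σ, with 0 ≤ n < #P, satisfying σⁿ(p) = p'). Then (q−1)·ε = 0 in A_𝒯. -/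
open Classical in
theorem stmt10 {P L : Type*} [Fintype P] [Fintype L] [Membership P L]
    [Configuration.ProjectivePlane P L] (q : ℕ) (hq : 2 ≤ q)
    (horder : Configuration.ProjectivePlane.order P L = q)
    (lam : P ≃ L) (T : Set (P × P × P)) (hT : IsTrianglePresentation lam T)
    (σ : Equiv.Perm P)
    (hσT : ∀ x y z : P, (x, y, z) ∈ T → (σ x, σ y, σ z) ∈ T)
    (hσreg : ∀ p p' : P, ∃! n : ℕ, n < Fintype.card P ∧ (σ ^ n) p = p') :
    (q - 1) • triangleEps lam T = 0 := by
  classical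
  set N := Fintype.card P with hNdef
  set ε := triangleEps lam T with hεdef
  have hq2 : 4 ≤ q ^ 2 := by
    calc (4 : ℕ) = 2 ^ 2 := rfl
    _ ≤ q ^ 2 := Nat.pow_le_pow_left hq 2
  have hN : N = q ^ 2 + q + 1 := by
    rw [hNdef, Configuration.ProjectivePlane.card_points P L, horder]
  -- the projection homomorphism
  let π : FreeAbelianGroup (Option P) →+ TriangleGroup lam T :=
    QuotientAddGroup.mk' (AddSubgroup.closure (triangleRels lam T))
  have hπ0 : ∀ r ∈ triangleRels lam T, π r = 0 := fun r hr =>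
    (QuotientAddGroup.eq_zero_iff r).mpr (AddSubgroup.subset_closure hr)
  -- relation family (A)
  have relA : ∀ x : P,
      ∑ y ∈ Finset.univ.filter (fun y : P => ¬ y ∈ lam x), triangleGen lam T y
        = triangleGen lam T x := by
    intro x
    have h := hπ0 _ (Or.inl (Or.inl ⟨x, rfl⟩))
    rw [map_sub, map_sum, sub_eq_zero] at h
    exact h
  -- relation family (B)
  have relB : ∀ x y z : P, (x, y, z) ∈ T →
      triangleGen lam T x + triangleGen lam T y + triangleGen lam T z = ε := by
    intro x y z hxyz
    have h := hπ0 _ (Or.inl (Or.inr ⟨(x, y, z), hxyz, rfl⟩))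
    rw [map_sub, map_add, map_add, sub_eq_zero] at h
    exact h
  -- relation (C)
  have relC : ∑ x : P, triangleGen lam T x = ε := by
    have h := hπ0 _ (Or.inr rfl)
    rw [map_sub, map_sum, sub_eq_zero] at h
    exact h
  -- counting: each point lies on q+1 of the lines lam x
  have hcard_on : ∀ y : P,
      (Finset.univ.filter fun x : P => y ∈ lam x).card = q + 1 := by
    intro y
    have h1 : (Finset.univ.filter fun x : P => y ∈ lam x).card
        = Fintype.card {x : P // y ∈ lam x} := (Fintype.card_subtype _).symm
    have e : {x : P // y ∈ lam x} ≃ {l : L // y ∈ l} :=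
      lam.subtypeEquiv (fun x => Iff.rfl)
    have h2 := Configuration.ProjectivePlane.lineCount_eq L y
    rw [horder] at h2
    rw [h1, Fintype.card_congr e, ← Nat.card_eq_fintype_card]
    exact h2
  have hcard_off : ∀ y : P,
      (Finset.univ.filter fun x : P => ¬ y ∈ lam x).card = q ^ 2 := by
    intro y
    have h := Finset.card_filter_add_card_filter_not
      (s := (Finset.univ : Finset P)) (p := fun x : P => y ∈ lam x)
    rw [hcard_on y, Finset.card_univ] at h
    omega
  -- (q^2) • ε = ε
  have hA : (q ^ 2) • ε = ε := by
    have hswap : ∑ x : P, ∑ y ∈ Finset.univ.filter (fun y : P => ¬ y ∈ lam x),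
          triangleGen lam T y
        = ∑ y : P, ∑ x ∈ Finset.univ.filter (fun x : P => ¬ y ∈ lam x),
          triangleGen lam T y := by
      simp_rw [Finset.sum_filter]
      exact Finset.sum_comm
    have h1 : ∑ x : P, ∑ y ∈ Finset.univ.filter (fun y : P => ¬ y ∈ lam x),
        triangleGen lam T y = ε := by
      rw [Finset.sum_congr rfl fun x _ => relA x, relC]
    rw [hswap] at h1
    have h2 : ∀ y : P, ∑ x ∈ Finset.univ.filter (fun x : P => ¬ y ∈ lam x),
        triangleGen lam T y = (q ^ 2) • triangleGen lam T y := by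
      intro y
      rw [Finset.sum_const, hcard_off y]
    rw [Finset.sum_congr rfl fun y _ => h2 y, ← Finset.smul_sum, relC] at h1
    exact h1
  have hA0 : (q ^ 2 - 1) • ε = 0 := by
    have h : q ^ 2 = (q ^ 2 - 1) + 1 := by omega
    rw [h, add_smul, one_smul] at hA
    exact add_right_cancel (hA.trans (zero_add ε).symm)
  -- find a triangle
  have hPne : Nonempty P := by
    rw [← Fintype.card_pos_iff]
    omega
  obtain ⟨x0⟩ := hPne
  have hptcard : 0 < Fintype.card {p : P // p ∈ lam x0} := by
    have h := Configuration.ProjectivePlane.pointCount_eq P (lam x0)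
    rw [horder] at h
    rw [← Nat.card_eq_fintype_card]
    unfold Configuration.pointCount at h
    omega
  obtain ⟨y0, hy0⟩ := Fintype.card_pos_iff.mp hptcard
  obtain ⟨z0, hz0⟩ := (hT.exists_iff x0 y0).mpr hy0
  -- powers of σ preserve the triangle
  have hpow : ∀ n : ℕ, ((σ ^ n) x0, (σ ^ n) y0, (σ ^ n) z0) ∈ T := by
    intro n
    induction n with
    | zero => simpa using hz0
    | succ n ih =>
      have h : ∀ p : P, (σ ^ (n + 1)) p = σ ((σ ^ n) p) := by
        intro p
        rw [pow_succ']
        rfl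
      rw [h x0, h y0, h z0]
      exact hσT _ _ _ ih
  -- the orbit map is bijective
  have hbij : ∀ w : P, Function.Bijective (fun n : Fin N => (σ ^ (n : ℕ)) w) := by
    intro w
    constructor
    · intro m n hmn
      obtain ⟨k, _, huniq⟩ := hσreg w ((σ ^ (m : ℕ)) w)
      have h1 := huniq (m : ℕ) ⟨m.2, rfl⟩
      have h2 := huniq (n : ℕ) ⟨n.2, hmn.symm⟩
      exact Fin.ext (h1.trans h2.symm)
    · intro p
      obtain ⟨k, ⟨hk, hσk⟩, _⟩ := hσreg w p
      exact ⟨⟨k, hk⟩, hσk⟩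
  have hsum : ∀ w : P, ∑ n : Fin N, triangleGen lam T ((σ ^ (n : ℕ)) w) = ε := by
    intro w
    rw [Fintype.sum_bijective _ (hbij w)
      (fun n : Fin N => triangleGen lam T ((σ ^ (n : ℕ)) w))
      (fun p => triangleGen lam T p) (fun n => rfl)]
    exact relC
  -- 3 • ε = N • ε
  have hB : ε + ε + ε = N • ε := by
    have h : ∑ n : Fin N, (triangleGen lam T ((σ ^ (n : ℕ)) x0)
        + triangleGen lam T ((σ ^ (n : ℕ)) y0)
        + triangleGen lam T ((σ ^ (n : ℕ)) z0)) = ∑ _n : Fin N, ε :=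
      Finset.sum_congr rfl fun n _ => relB _ _ _ (hpow n)
    rw [Finset.sum_add_distrib, Finset.sum_add_distrib, hsum x0, hsum y0, hsum z0,
      Finset.sum_const, Finset.card_univ, Fintype.card_fin] at h
    exact h
  have hB0 : (q ^ 2 + q - 2) • ε = 0 := by
    have h3 : ε + ε + ε = (3 : ℕ) • ε := by
      rw [succ_nsmul, succ_nsmul, one_nsmul]
    have hNsplit : N = (q ^ 2 + q - 2) + 3 := by omega
    rw [h3, hNsplit, add_smul] at hB
    exact add_right_cancel ((zero_add ((3:ℕ) • ε)).symm ▸ hB).symm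
  -- combine
  have hsplit : q ^ 2 + q - 2 = (q ^ 2 - 1) + (q - 1) := by omega
  rw [hsplit, add_smul, hA0, zero_add] at hB0
  exact hB0
end

section
/- Let φ : P → P and Φ : L → L be bijections such that for all p ∈ P and ℓ ∈ L, p is incident with ℓ if and only if φ(p) is incident with Φ(ℓ). Suppose φ∘φ∘φ is the identity on P, and suppose (x,y,z) ∈ 𝒯 implies (φx, φy, φz) ∈ 𝒯. Then the set 𝒯^φ = {(x, φ(y), φ(φ(z))) : (x,y,z) ∈ 𝒯} is a triangle presentation compatible with the bijection x ↦ Φ(λ(x)); that is: (i) for x, y ∈ P there exists z ∈ P with (x,y,z) ∈ 𝒯^φ if and only if y is incident with Φ(λ(x)); (ii) if (x,y,z) ∈ 𝒯^φ then (y,z,x) ∈ 𝒯^φ; (iii) for x, y ∈ P there is at most one z ∈ P with (x,y,z) ∈ 𝒯^φ. -/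
open Classical in
theorem stmt13 {P L : Type*} [Fintype P] [Fintype L] [Membership P L]
    [Configuration.ProjectivePlane P L] (q : ℕ) (hq : 2 ≤ q)
    (horder : Configuration.ProjectivePlane.order P L = q)
    (lam : P ≃ L) (T : Set (P × P × P)) (hT : IsTrianglePresentation lam T)
    (φ : Equiv.Perm P) (Φ : Equiv.Perm L)
    (hcol : ∀ (p : P) (l : L), p ∈ l ↔ φ p ∈ Φ l)
    (hφ3 : ∀ p : P, φ (φ (φ p)) = p)
    (hφT : ∀ x y z : P, (x, y, z) ∈ T → (φ x, φ y, φ z) ∈ T) :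
    IsTrianglePresentation (lam.trans Φ)
      {t : P × P × P | ∃ x y z : P, (x, y, z) ∈ T ∧ t = (x, φ y, φ (φ z))} := by
  constructor
  · intro x y
    constructor
    · rintro ⟨z, a, b, c, habc, heq⟩
      simp only [Prod.mk.injEq] at heq
      obtain ⟨rfl, rfl, rfl⟩ := heq
      have hb : b ∈ lam x := (hT.exists_iff x b).mp ⟨c, habc⟩
      exact (hcol b (lam x)).mp hb
    · intro hy
      have : φ.symm y ∈ lam x := by
        have := (hcol (φ.symm y) (lam x)).2
        simp only [Equiv.apply_symm_apply] at this
        exact this hy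
      obtain ⟨z, hz⟩ := (hT.exists_iff x (φ.symm y)).mpr this
      exact ⟨φ (φ z), x, φ.symm y, z, hz, by simp⟩
  · rintro x y z ⟨a, b, c, habc, heq⟩
    simp only [Prod.mk.injEq] at heq
    obtain ⟨rfl, rfl, rfl⟩ := heq
    refine ⟨φ b, φ c, φ x, hφT _ _ _ (hT.cyclic _ _ _ habc), ?_⟩
    simp [hφ3]
  · rintro x y z z' ⟨a, b, c, habc, heq⟩ ⟨a', b', c', habc', heq'⟩
    simp only [Prod.mk.injEq] at heq heq'
    obtain ⟨ha, hb, hc⟩ := heq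
    obtain ⟨ha', hb', hc'⟩ := heq'
    have hbb : b = b' := φ.injective (hb.symm.trans hb')
    have haa : a = a' := ha.symm.trans ha'
    rw [← haa, ← hbb] at habc'
    rw [hc, hc', hT.unique a b c c' habc habc']
end

section
/- Let φ : P → P and Φ : L → L be bijections such that for all p ∈ P and ℓ ∈ L, p is incident with ℓ if and only if φ(p) is incident with Φ(ℓ); suppose φ∘φ∘φ is the identity on P and (x,y,z) ∈ 𝒯 implies (φx, φy, φz) ∈ 𝒯. Suppose moreover there exists a bijection σ : P → P such that (x,y,z) ∈ 𝒯 implies (σx, σy, σz) ∈ 𝒯 and the cyclic group generated by σ acts simply transitively on P. Then, in the abelian group A_{𝒯^φ} associated to the triangle presentation 𝒯^φ = {(x, φ(y), φ(φ(z))) : (x,y,z) ∈ 𝒯} and the bijection x ↦ Φ(λ(x)), one has (q−1)·ε = 0. -/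
set_option maxHeartbeats 1000000

open Classical in
theorem tri_aux {P : Type*} [Fintype P] {A : Type*} [AddCommGroup A] (g : P → A) (e : A)
    (q : ℕ) (hq : 2 ≤ q) (hNq : Fintype.card P = q ^ 2 + q + 1)
    (R : P → P → Prop)
    (hsum : ∑ x : P, g x = e)
    (hone : ∀ x : P, ∑ y ∈ Finset.univ.filter (fun y : P => ¬ R x y), g y = g x)
    (hcard : ∀ y : P, (Finset.univ.filter fun x : P => R x y).card = q + 1)
    (u v w : ℕ → P)
    (hub : ∀ f : P → A, ∑ n ∈ Finset.range (Fintype.card P), f (u n) = ∑ p : P, f p)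
    (hvb : ∀ f : P → A, ∑ n ∈ Finset.range (Fintype.card P), f (v n) = ∑ p : P, f p)
    (hwb : ∀ f : P → A, ∑ n ∈ Finset.range (Fintype.card P), f (w n) = ∑ p : P, f p)
    (htr : ∀ n : ℕ, g (u n) + g (v n) + g (w n) = e) :
    (q - 1) • e = 0 := by
  classical
  set N := Fintype.card P with hN
  have hline : ∀ x : P, ∑ y ∈ Finset.univ.filter (fun y : P => R x y), g y = e - g x := by
    intro x
    have hsplit := Finset.sum_filter_add_sum_filter_not Finset.univ (fun y : P => R x y) g
    rw [hone x, hsum] at hsplit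
    exact eq_sub_of_add_eq hsplit
  have hA : N • e = (q + 2) • e := by
    have hdc : ∑ x : P, ∑ y ∈ Finset.univ.filter (fun y : P => R x y), g y
        = (q + 1) • e := by
      calc ∑ x : P, ∑ y ∈ Finset.univ.filter (fun y : P => R x y), g y
          = ∑ x : P, ∑ y : P, if R x y then g y else 0 := by
            refine Finset.sum_congr rfl fun x _ => ?_
            rw [Finset.sum_filter]
        _ = ∑ y : P, ∑ x : P, if R x y then g y else 0 := Finset.sum_comm
        _ = ∑ y : P, (q + 1) • g y := by
            refine Finset.sum_congr rfl fun y _ => ?_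
            rw [← Finset.sum_filter, Finset.sum_const, hcard y]
        _ = (q + 1) • e := by rw [← Finset.smul_sum, hsum]
    have hdc2 : ∑ x : P, ∑ y ∈ Finset.univ.filter (fun y : P => R x y), g y
        = N • e - e := by
      rw [Finset.sum_congr rfl fun x (_ : x ∈ Finset.univ) => hline x, Finset.sum_sub_distrib,
        Finset.sum_const, Finset.card_univ, hsum, ← hN]
    have h3 : N • e - e = (q + 1) • e := hdc2.symm.trans hdc
    have h2 : N • e = (q + 1) • e + e := by rw [← h3]; abel
    rw [h2, ← succ_nsmul]
  have htrisum : e + e + e = N • e := by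
    have h2 : ∑ n ∈ Finset.range N, (g (u n) + g (v n) + g (w n))
        = ∑ _n ∈ Finset.range N, e := Finset.sum_congr rfl fun n _ => htr n
    rw [Finset.sum_add_distrib, Finset.sum_add_distrib, hub g, hvb g, hwb g,
      hsum, Finset.sum_const, Finset.card_range] at h2
    exact h2
  have hfinal : (q + 2) • e = e + e + e := by
    rw [← hA, htrisum]
  have hq2 : q + 2 = (q - 1) + 3 := by omega
  have h3e : (3 : ℕ) • e = e + e + e := by
    rw [show (3 : ℕ) = 2 + 1 from rfl, add_nsmul, two_nsmul, one_nsmul]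
  rw [hq2, add_nsmul, h3e] at hfinal
  have := add_right_cancel (b := e + e + e) (a := (q-1) • e) (c := 0) (by rw [hfinal, zero_add])
  exact this

open Classical in
theorem stmt14 {P L : Type*} [Fintype P] [Fintype L] [Membership P L]
    [Configuration.ProjectivePlane P L] (q : ℕ) (hq : 2 ≤ q)
    (horder : Configuration.ProjectivePlane.order P L = q)
    (lam : P ≃ L) (T : Set (P × P × P)) (hT : IsTrianglePresentation lam T)
    (φ : Equiv.Perm P) (Φ : Equiv.Perm L)
    (hcol : ∀ (p : P) (l : L), p ∈ l ↔ φ p ∈ Φ l)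
    (hφ3 : ∀ p : P, φ (φ (φ p)) = p)
    (hφT : ∀ x y z : P, (x, y, z) ∈ T → (φ x, φ y, φ z) ∈ T)
    (σ : Equiv.Perm P)
    (hσT : ∀ x y z : P, (x, y, z) ∈ T → (σ x, σ y, σ z) ∈ T)
    (hσreg : ∀ p p' : P, ∃! n : ℕ, n < Fintype.card P ∧ (σ ^ n) p = p') :
    (q - 1) • triangleEps (lam.trans Φ)
        {t : P × P × P | ∃ x y z : P, (x, y, z) ∈ T ∧ t = (x, φ y, φ (φ z))} = 0 := by
  classical
  set μ : P ≃ L := lam.trans Φ with hμdef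
  set T' : Set (P × P × P) :=
    {t : P × P × P | ∃ x y z : P, (x, y, z) ∈ T ∧ t = (x, φ y, φ (φ z))} with hT'def
  set π : FreeAbelianGroup (Option P) →+ TriangleGroup μ T' :=
    QuotientAddGroup.mk' (AddSubgroup.closure (triangleRels μ T')) with hπdef
  set g : P → TriangleGroup μ T' := triangleGen μ T' with hgdef
  set e : TriangleGroup μ T' := triangleEps μ T' with hedef
  have hπ0 : ∀ r ∈ triangleRels μ T', π r = 0 := fun r hr =>
    (QuotientAddGroup.eq_zero_iff r).mpr (AddSubgroup.subset_closure hr)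
  have hgπ : ∀ x : P, g x = π (FreeAbelianGroup.of (some x)) := fun _ => rfl
  have heπ : e = π (FreeAbelianGroup.of (none : Option P)) := rfl
  -- relation (3) : sum of all generators equals ε
  have hsum : ∑ x : P, g x = e := by
    have h := hπ0 _ (Set.mem_union_right _ rfl)
    rw [map_sub, map_sum, sub_eq_zero] at h
    simp only [← hgπ, ← heπ] at h
    exact h
  -- relation (1)
  have hone : ∀ x : P,
      ∑ y ∈ Finset.univ.filter (fun y : P => ¬ y ∈ μ x), g y = g x := by
    intro x
    have h := hπ0 _ (Set.mem_union_left _ (Set.mem_union_left _ (Set.mem_range_self x)))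
    rw [map_sub, map_sum, sub_eq_zero] at h
    simp only [← hgπ] at h
    exact h
  -- relation (2)
  have htri : ∀ t ∈ T', g t.1 + g t.2.1 + g t.2.2 = e := by
    intro t ht
    have h := hπ0 _ (Set.mem_union_left _ (Set.mem_union_right _ ⟨t, ht, rfl⟩))
    rw [map_sub, map_add, map_add, sub_eq_zero] at h
    simp only [← hgπ, ← heπ] at h
    exact h
  -- each point is on q+1 lines
  have hcard : ∀ y : P, (Finset.univ.filter fun x : P => y ∈ μ x).card = q + 1 := by
    intro y
    have h1 := Configuration.ProjectivePlane.lineCount_eq L y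
    rw [horder] at h1
    rw [← h1, Configuration.lineCount, Nat.card_eq_fintype_card, Fintype.card_subtype]
    apply Finset.card_bij (fun x _ => μ x)
    · intro a ha; simpa using (by simpa using ha)
    · intro a _ b _ h; exact μ.injective h
    · intro l hl; exact ⟨μ.symm l, by simpa using (by simpa using hl), by simp⟩
  -- a triple in T
  have hNq : Fintype.card P = q ^ 2 + q + 1 := by
    rw [Configuration.ProjectivePlane.card_points P L, horder]
  have hNpos : 0 < Fintype.card P := by omega
  obtain ⟨x₀⟩ : Nonempty P := Fintype.card_pos_iff.mp hNpos
  have hptc := Configuration.ProjectivePlane.pointCount_eq P (lam x₀)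
  rw [horder] at hptc
  have hpos : 0 < Configuration.pointCount P (lam x₀) := by omega
  obtain ⟨y₀, hy₀⟩ : Nonempty {p : P // p ∈ lam x₀} := (Nat.card_pos_iff.mp hpos).1
  obtain ⟨z₀, hz₀⟩ := (hT.exists_iff x₀ y₀).mpr hy₀
  have hpow : ∀ n : ℕ, ((σ ^ n) x₀, (σ ^ n) y₀, (σ ^ n) z₀) ∈ T := by
    intro n
    induction n with
    | zero => simpa using hz₀
    | succ n ih =>
      have h := hσT _ _ _ ih
      simpa [pow_succ', Equiv.Perm.mul_apply] using h
  -- orbit sums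
  have horb : ∀ (f : P → TriangleGroup μ T') (p : P),
      ∑ n ∈ Finset.range (Fintype.card P), f ((σ ^ n) p) = ∑ p' : P, f p' := by
    intro f p
    apply Finset.sum_bij (fun n _ => (σ ^ n) p)
    · intro a _; exact Finset.mem_univ _
    · intro a ha b hb hab
      exact (hσreg p ((σ ^ a) p)).unique ⟨Finset.mem_range.mp ha, rfl⟩
        ⟨Finset.mem_range.mp hb, hab.symm⟩
    · intro p' _
      obtain ⟨n, ⟨hn, hnp⟩, -⟩ := hσreg p p'
      exact ⟨n, Finset.mem_range.mpr hn, hnp⟩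
    · intro a _; rfl
  have htr : ∀ n : ℕ, g ((σ ^ n) x₀) + g (φ ((σ ^ n) y₀)) + g (φ (φ ((σ ^ n) z₀))) = e :=
    fun n => htri ((σ ^ n) x₀, φ ((σ ^ n) y₀), φ (φ ((σ ^ n) z₀))) ⟨_, _, _, hpow n, rfl⟩
  exact tri_aux g e q hq hNq (fun x y => y ∈ μ x) hsum hone hcard
    (fun n => (σ ^ n) x₀) (fun n => φ ((σ ^ n) y₀)) (fun n => φ (φ ((σ ^ n) z₀)))
    (fun f => horb f x₀)
    (fun f => (horb (fun p => f (φ p)) y₀).trans (Equiv.sum_comp φ f))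
    (fun f => (horb (fun p => f (φ (φ p))) z₀).trans
      ((Equiv.sum_comp φ (fun p => f (φ p))).trans (Equiv.sum_comp φ f)))
    htr
end

section
/- The set 𝒯₀ is invariant under cyclic permutations: if (a, b, c) ∈ 𝒯₀ then (b, c, a) ∈ 𝒯₀. -/
/-- The image of `Kˣ` in `Fˣ`, as a subgroup of `Fˣ`. -/
def baseUnits (K F : Type*) [Field K] [Field F] [Algebra K F] : Subgroup Fˣ :=
  (Units.map (algebraMap K F).toMonoidHom).range

/-- The quotient group `P = Fˣ/Kˣ`. -/
abbrev ProjPts (K F : Type*) [Field K] [Field F] [Algebra K F] : Type _ :=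
  Fˣ ⧸ baseUnits K F

/-- The class in `P = Fˣ/Kˣ` of a unit `x ∈ Fˣ`. -/
def pbar {K F : Type*} [Field K] [Field F] [Algebra K F] (x : Fˣ) : ProjPts K F :=
  QuotientGroup.mk x

/-- The triangle presentation of Tits type:
`𝒯₀ = {(x̄, x̄·ξ̄, x̄·ξ̄^(q+1)) : x, ξ ∈ Fˣ, Tr(ξ) = 0}`. -/
def titsT0 (q : ℕ) (K F : Type*) [Field K] [Field F] [Algebra K F] :
    Set (ProjPts K F × ProjPts K F × ProjPts K F) :=
  {t | ∃ x ξ : Fˣ, Algebra.trace K F (ξ : F) = 0 ∧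
        t = (pbar x, pbar x * pbar ξ, pbar x * pbar ξ ^ (q + 1))}

/-!
Rotating `(x̄, x̄ξ̄, x̄ξ̄^(q+1))` gives the triple built from `y = xξ` and `η = ξ^q`. Frobenius
preserves the trace, so `Tr η = 0`, and `ξ^(q²+q+1)` is the norm of `ξ`, which lies in `K`,
so `ȳ η̄^(q+1) = x̄ ξ̄^(q²+q+1) = x̄`.
-/

section

variable {K L : Type*} [Field K] [Field L] [Algebra K L]

lemma Algebra.trace_pow_card [Fintype K] [Finite L] (x : L) :
    Algebra.trace K L (x ^ Fintype.card K) = Algebra.trace K L x :=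
  Algebra.trace_eq_of_algEquiv (FiniteField.frobeniusAlgEquivOfAlgebraic K L) x

lemma pbar_mul (x y : Lˣ) : pbar (K := K) (x * y) = pbar x * pbar y :=
  rfl

lemma pbar_pow (x : Lˣ) (n : ℕ) : pbar (K := K) (x ^ n) = pbar x ^ n :=
  rfl

lemma pbar_mul_of_mem {x k : Lˣ} (hk : k ∈ baseUnits K L) : pbar (K := K) (x * k) = pbar x :=
  QuotientGroup.mk_mul_of_mem x hk

lemma pow_sum_finrank_mem_baseUnits [Finite L] (ξ : Lˣ) :
    ξ ^ ∑ i ∈ Finset.range (Module.finrank K L), Nat.card K ^ i ∈ baseUnits K L :=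
  ⟨Units.map (Algebra.norm K) ξ, Units.ext (FiniteField.algebraMap_norm_eq_pow_sum K L ξ)⟩

lemma rotate_mem_titsT0 {q : ℕ} (x ξ : Lˣ) (htr : Algebra.trace K L ((ξ : L) ^ q) = 0)
    (hnorm : ξ ^ (1 + q + q ^ 2) ∈ baseUnits K L) :
    (pbar x * pbar ξ, pbar x * pbar ξ ^ (q + 1), pbar x) ∈ titsT0 q K L := by
  refine ⟨x * ξ, ξ ^ q, by rwa [Units.val_pow_eq_pow_val], ?_⟩
  -- compute in `Lˣ`: in `P` the product (from `Group`) and `1` (from `CommGroup`) do not unify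
  -- reducibly, so `mul_one` and `ring` fail there
  simp only [← pbar_pow, ← pbar_mul]
  have hsnd : x * ξ * ξ ^ q = x * ξ ^ (q + 1) := by rw [mul_assoc, ← pow_succ']
  have hthd : x * ξ * (ξ ^ q) ^ (q + 1) = x * ξ ^ (1 + q + q ^ 2) := by
    rw [mul_assoc, ← pow_mul, ← pow_succ']
    congr 2
    ring
  rw [hsnd, hthd, pbar_mul_of_mem hnorm]

end

theorem stmt15_general (q : ℕ) (K F : Type*) [Field K] [Field F]
    [Algebra K F] [Fintype K] (hK : Fintype.card K = q)
    (hd : Module.finrank K F = 3) :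
    ∀ a b c : ProjPts K F, (a, b, c) ∈ titsT0 q K F → (b, c, a) ∈ titsT0 q K F := by
  rintro _ _ _ ⟨x, ξ, htr, ⟨⟩⟩
  have : Module.Finite K F := Module.finite_of_finrank_eq_succ hd
  have : Finite F := Module.finite_of_finite K
  refine rotate_mem_titsT0 x ξ ?_ ?_
  · rw [← hK, Algebra.trace_pow_card, htr]
  · simpa only [hd, Nat.card_eq_fintype_card, hK, Finset.sum_range_succ, Finset.range_one,
      Finset.sum_singleton, pow_zero, pow_one] using pow_sum_finrank_mem_baseUnits (K := K) ξ

theorem stmt15 (q : ℕ) (hq : IsPrimePow q) (K F : Type*) [Field K] [Field F]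
    [Algebra K F] [Fintype K] (hK : Fintype.card K = q)
    (hd : Module.finrank K F = 3) :
    ∀ a b c : ProjPts K F, (a, b, c) ∈ titsT0 q K F → (b, c, a) ∈ titsT0 q K F :=
  stmt15_general q K F hK hd
end

section
/- The set 𝒯₀ satisfies conditions (i) and (iii) of a triangle presentation compatible with λ₀: for all x, y ∈ Lˣ, there exists z̄ ∈ P with (x̄, ȳ, z̄) ∈ 𝒯₀ if and only if Tr(y/x) = 0; and for all x, y ∈ Lˣ there is at most one z̄ ∈ P with (x̄, ȳ, z̄) ∈ 𝒯₀. -/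
/-
A triple of `𝒯₀` is determined by its first two entries: if `(x̄, ȳ, z̄) = (x̄', x̄'ξ̄, x̄'ξ̄^(q+1))` then `ξ̄ = ȳ/x̄`, so
`z̄ = x̄ (ȳ/x̄)^(q+1)`, and `Tr(ξ) = 0` is equivalent to `Tr(y/x) = 0` because `ξ` and `y/x` differ
by a factor in `Kˣ`, which the `K`-linear trace pulls out.
-/

section

variable {K F : Type*} [Field K] [Field F] [Algebra K F]

lemma pbar_eq_pbar_iff {a b : Fˣ} :
    pbar (K := K) a = pbar b ↔ ∃ c : Kˣ, (b : F) = algebraMap K F c * a := by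
  rw [pbar, pbar, QuotientGroup.eq]
  constructor
  · rintro ⟨c, hc⟩
    refine ⟨c, ?_⟩
    rw [eq_inv_mul_iff_mul_eq] at hc
    simp [← hc, mul_comm]
  · rintro ⟨c, hc⟩
    exact ⟨c, Units.ext (by simp [hc, mul_comm])⟩

lemma pbar_mul_s16 (a b : Fˣ) : pbar (K := K) (a * b) = pbar a * pbar b := rfl

lemma pbar_div (a b : Fˣ) : pbar (K := K) (a / b) = pbar a / pbar b := rfl

lemma trace_eq_zero_iff_of_pbar_eq {a b : Fˣ} (h : pbar (K := K) a = pbar b) :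
    Algebra.trace K F (a : F) = 0 ↔ Algebra.trace K F (b : F) = 0 := by
  obtain ⟨c, hc⟩ := pbar_eq_pbar_iff.mp h
  rw [hc, ← Algebra.smul_def, map_smul, smul_eq_mul, mul_eq_zero, or_iff_right c.ne_zero]

lemma mk_mem_titsT0_iff (q : ℕ) (x y : Fˣ) (z : ProjPts K F) :
    (pbar x, pbar y, z) ∈ titsT0 q K F ↔
      Algebra.trace K F ((y / x : Fˣ) : F) = 0 ∧ z = pbar x * pbar (y / x) ^ (q + 1) := by
  constructor
  · rintro ⟨x', ξ, hξ, h⟩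
    simp only [Prod.mk.injEq] at h
    obtain ⟨hx, hy, rfl⟩ := h
    have hξ' : pbar ξ = pbar (K := K) (y / x) := by
      rw [pbar_div, hy, hx]
      exact (mul_div_cancel_left (pbar x') (pbar ξ)).symm
    exact ⟨(trace_eq_zero_iff_of_pbar_eq hξ').mp hξ, by rw [hx, hξ']⟩
  · rintro ⟨htr, rfl⟩
    exact ⟨x, y / x, htr, by rw [← pbar_mul_s16, mul_div_cancel]⟩

end

theorem stmt16_general (q : ℕ) (K F : Type*) [Field K] [Field F]
    [Algebra K F] :
    (∀ x y : Fˣ,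
        (∃ z : ProjPts K F, (pbar x, pbar y, z) ∈ titsT0 q K F) ↔
          Algebra.trace K F ((y / x : Fˣ) : F) = 0) ∧
      ∀ (x y : Fˣ) (z z' : ProjPts K F),
        (pbar x, pbar y, z) ∈ titsT0 q K F → (pbar x, pbar y, z') ∈ titsT0 q K F →
          z = z' := by
  refine ⟨fun x y => ?_, fun x y z z' hz hz' => ?_⟩
  · simp only [mk_mem_titsT0_iff, exists_and_left, exists_eq, and_true]
  · rw [((mk_mem_titsT0_iff q x y z).mp hz).2, ((mk_mem_titsT0_iff q x y z').mp hz').2]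

theorem stmt16 (q : ℕ) (hq : IsPrimePow q) (K F : Type*) [Field K] [Field F]
    [Algebra K F] [Fintype K] (hK : Fintype.card K = q)
    (hd : Module.finrank K F = 3) :
    (∀ x y : Fˣ,
        (∃ z : ProjPts K F, (pbar x, pbar y, z) ∈ titsT0 q K F) ↔
          Algebra.trace K F ((y / x : Fˣ) : F) = 0) ∧
      ∀ (x y : Fˣ) (z z' : ProjPts K F),
        (pbar x, pbar y, z) ∈ titsT0 q K F → (pbar x, pbar y, z') ∈ titsT0 q K F →
          z = z' :=
  stmt16_general q K F
end

section
/- The set {(c̄⁻¹, b̄⁻¹, ā⁻¹) : (ā, b̄, c̄) ∈ 𝒯₀} is equal to the set 𝒯₀' = {(x̄, x̄·ξ̄, x̄·ξ̄^{q²+1}) ∈ P × P × P : x, ξ ∈ Lˣ, Tr(ξ) = 0}. -/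
/-- The related triangle presentation
`𝒯₀' = {(x̄, x̄·ξ̄, x̄·ξ̄^(q²+1)) : x, ξ ∈ Fˣ, Tr(ξ) = 0}`. -/
def titsT0' (q : ℕ) (K F : Type*) [Field K] [Field F] [Algebra K F] :
    Set (ProjPts K F × ProjPts K F × ProjPts K F) :=
  {t | ∃ x ξ : Fˣ, Algebra.trace K F (ξ : F) = 0 ∧
        t = (pbar x, pbar x * pbar ξ, pbar x * pbar ξ ^ (q ^ 2 + 1))}

theorem stmt17 (q : ℕ) (hq : IsPrimePow q) (K F : Type*) [Field K] [Field F]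
    [Algebra K F] [Fintype K] (hK : Fintype.card K = q)
    (hd : Module.finrank K F = 3) :
    {t : ProjPts K F × ProjPts K F × ProjPts K F |
        ∃ a b c : ProjPts K F, (a, b, c) ∈ titsT0 q K F ∧ t = (c⁻¹, b⁻¹, a⁻¹)}
      = titsT0' q K F := by
  haveI : FiniteDimensional K F := FiniteDimensional.of_finrank_pos (by omega)
  haveI : Finite F := Module.finite_of_finite K
  haveI : Fintype F := Fintype.ofFinite F
  have hcard : Fintype.card F = q ^ 3 := by
    rw [Module.card_eq_pow_finrank (K := K) (V := F), hK, hd]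
  have hQ : ∀ u : Fˣ, u ^ (q ^ 3) = u := by
    intro u
    ext
    push_cast
    rw [← hcard, FiniteField.pow_card]
  -- characteristic
  obtain ⟨p, n, hp, hn, hpn⟩ := hq
  haveI hfp : Fact p.Prime := ⟨hp.nat_prime⟩
  haveI hKp : CharP K p := by
    haveI : CharP K (ringChar K) := ringChar.charP K
    obtain ⟨m, hm, hcard'⟩ := FiniteField.card K (ringChar K)
    have hdvd : p ∣ ringChar K ^ (m : ℕ) := by
      rw [← hcard', hK, ← hpn]; exact dvd_pow_self p hn.ne'
    have : p = ringChar K :=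
      (Nat.prime_dvd_prime_iff_eq hp.nat_prime hm).mp (hp.nat_prime.dvd_of_dvd_pow hdvd)
    rw [this]; exact ringChar.charP K
  haveI : CharP F p := charP_of_injective_algebraMap (algebraMap K F).injective p
  haveI : ExpChar F p := ExpChar.prime hp.nat_prime
  -- Frobenius as a K-algebra equivalence
  have hcomm : ∀ c : K, iterateFrobenius F p n (algebraMap K F c) = algebraMap K F c := by
    intro c
    rw [iterateFrobenius_def, ← map_pow, hpn, ← hK, FiniteField.pow_card]
  let φ : F →ₐ[K] F := { iterateFrobenius F p n with commutes' := hcomm }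
  have hφb : Function.Bijective φ :=
    Finite.injective_iff_bijective.mp (iterateFrobenius F p n).injective
  let e : F ≃ₐ[K] F := AlgEquiv.ofBijective φ hφb
  have htr : ∀ a : F, Algebra.trace K F (a ^ q) = Algebra.trace K F a := by
    intro a
    have h := Algebra.trace_eq_of_algEquiv e a
    rwa [show e a = a ^ q from by rw [← hpn]; rfl] at h
  -- quotient map lemmas
  have hmul : ∀ u v : Fˣ, pbar (K := K) (u * v) = pbar u * pbar v := fun _ _ => rfl
  have hinv : ∀ u : Fˣ, pbar (K := K) u⁻¹ = (pbar u)⁻¹ := fun _ => rfl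
  have hpow : ∀ (u : Fˣ) (k : ℕ), pbar (K := K) (u ^ k) = (pbar u) ^ k := fun u k =>
    map_pow (QuotientGroup.mk' (baseUnits K F)) u k
  have hgen : ∀ a s : Fˣ, (a * s)⁻¹ * s = a⁻¹ := fun a s => by
    rw [mul_inv, mul_assoc, inv_mul_cancel, mul_one]
  ext t
  simp only [Set.mem_setOf_eq, titsT0, titsT0']
  constructor
  · rintro ⟨a, b, c, ⟨x, ξ, hx0, habc⟩, ht⟩
    simp only [Prod.mk.injEq] at habc
    obtain ⟨rfl, rfl, rfl⟩ := habc
    subst ht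
    have hu1 : (x * ξ ^ (q + 1))⁻¹ * ξ ^ q = (x * ξ)⁻¹ := by
      rw [pow_succ, mul_comm (ξ ^ q) ξ, ← mul_assoc]
      exact hgen (x * ξ) (ξ ^ q)
    have hu2 : (x * ξ ^ (q + 1))⁻¹ * (ξ ^ q) ^ (q ^ 2 + 1) = x⁻¹ := by
      have hexp : (ξ ^ q) ^ (q ^ 2 + 1) = ξ ^ (q ^ 3) * ξ ^ q := by
        rw [← pow_mul, ← pow_add]; congr 1 <;> ring
      rw [hexp, hQ, ← pow_succ']
      exact hgen x (ξ ^ (q + 1))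
    refine ⟨(x * ξ ^ (q + 1))⁻¹, ξ ^ q, ?_, ?_⟩
    · rw [Units.val_pow_eq_pow_val, htr, hx0]
    · simp only [Prod.mk.injEq]
      refine ⟨?_, ?_, ?_⟩
      · rw [← hpow, ← hmul]
        exact (hinv _).symm
      · rw [← hmul x ξ, ← hmul, ← hinv]
        exact congrArg pbar hu1.symm
      · rw [← hpow (ξ ^ q), ← hmul, ← hinv]
        exact congrArg pbar hu2.symm
  · rintro ⟨y, η, hη, rfl⟩
    have hu1 : (y * η ^ (q ^ 2 + 1))⁻¹ * (η ^ (q ^ 2)) ^ (q + 1) = y⁻¹ := by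
      have hexp : (η ^ (q ^ 2)) ^ (q + 1) = η ^ (q ^ 3) * η ^ (q ^ 2) := by
        rw [← pow_mul, ← pow_add]; congr 1 <;> ring
      rw [hexp, hQ, ← pow_succ']
      exact hgen y (η ^ (q ^ 2 + 1))
    have hu2 : (y * η ^ (q ^ 2 + 1))⁻¹ * η ^ (q ^ 2) = (y * η)⁻¹ := by
      rw [pow_succ, mul_comm (η ^ (q ^ 2)) η, ← mul_assoc]
      exact hgen (y * η) (η ^ (q ^ 2))
    refine ⟨pbar ((y * η ^ (q ^ 2 + 1))⁻¹),
      pbar ((y * η ^ (q ^ 2 + 1))⁻¹) * pbar (η ^ (q ^ 2)),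
      pbar ((y * η ^ (q ^ 2 + 1))⁻¹) * pbar (η ^ (q ^ 2)) ^ (q + 1),
      ⟨(y * η ^ (q ^ 2 + 1))⁻¹, η ^ (q ^ 2), ?_, rfl⟩, ?_⟩
    · rw [Units.val_pow_eq_pow_val, show (η : F) ^ (q ^ 2) = ((η : F) ^ q) ^ q from by
        rw [← pow_mul, sq], htr, htr, hη]
    · simp only [Prod.mk.injEq]
      refine ⟨?_, ?_, ?_⟩
      · rw [← hpow, ← hmul, ← hinv]
        exact congrArg pbar (by rw [hu1, inv_inv])
      · rw [← hmul y η, ← hmul, ← hinv]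
        exact congrArg pbar (by rw [hu2, inv_inv])
      · rw [← hpow, ← hmul, ← hinv]
        exact congrArg pbar (inv_inv _).symm
end
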